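/- arXiv:2407.13434 — 4 statements merged into one kernel-verified Lean document; each statement's English description precedes it below -/
import Mathlib

section
/- For positive integers k ≤ n, the sum of 1/(l₁·l₂⋯l_k) over all k-tuples (l₁,…,l_k) of positive integers with l₁+l₂+⋯+l_k = n equals (k!/n!)·e_{n-k}(1,2,…,n-1), where e_l denotes the l-th elementary symmetric polynomial. -/
open Finset Polynomial

/-- The set of `k`-tuples of positive integers summing to `n`. -/
def P (k n : ℕ) : Finset (Fin k → ℕ) :=
  (Finset.Nat.antidiagonalTuple k n).filter fun l => ∀ i, 0 < l i

/-- `∑_{(l₁,…,l_k)∈P(k,n)} 1/(l₁⋯l_k)`. -/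
def S (k n : ℕ) : ℚ := ∑ l ∈ P k n, (∏ i, (l i : ℚ))⁻¹

/-- `e_l(1,2,…,m)` : the l-th elementary symmetric polynomial evaluated at 1,…,m. -/
def esym (m l : ℕ) : ℚ := (((Finset.range m).val.map fun i => ((i : ℚ) + 1)).esymm l)

/-!
Multiplying `S (k + 1) (n + 1)` by `n + 1 = ∑ lᵢ` turns each summand `lᵢ / ∏ l` into the weight
of the tuple with its `i`-th entry removed. Tuples with `lᵢ = 1` then contribute `S k n`, and
decrementing an entry `lᵢ ≥ 2` gives the tuples of `P (k + 1) n`, so `n! / k! · S k n` satisfies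
the recurrence `c(n+1, k+1) = c(n, k) + n · c(n, k+1)` of the unsigned Stirling numbers of the
first kind. These are the coefficients of `X (X + 1) ⋯ (X + n - 1)`, which by Vieta's formulas
are the elementary symmetric functions of `1, …, n - 1`.
-/

open Nat

lemma mem_P {k n : ℕ} {l : Fin k → ℕ} : l ∈ P k n ↔ ∑ i, l i = n ∧ ∀ i, 0 < l i := by
  simp [P, Finset.Nat.mem_antidiagonalTuple]

lemma mem_P_succ {k n : ℕ} (i : Fin (k + 1)) {l : Fin (k + 1) → ℕ} :
    l ∈ P (k + 1) n ↔ 0 < l i ∧ l i ≤ n ∧ i.removeNth l ∈ P k (n - l i) := by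
  rw [mem_P, mem_P, Fin.sum_univ_succAbove l i, Fin.forall_iff_succAbove i]
  simp only [Fin.removeNth_apply]
  constructor
  · rintro ⟨hsum, hi, hpos⟩
    exact ⟨hi, by omega, by omega, hpos⟩
  · rintro ⟨hi, hle, hsum, hpos⟩
    exact ⟨by omega, hi, hpos⟩

section
variable {M : Type*} [AddCommMonoid M] {k : ℕ} (g : (Fin k → ℕ) → M) (i : Fin (k + 1)) (n : ℕ)

lemma sum_P_succ_filter_eq_one :
    ∑ l ∈ P (k + 1) (n + 1) with l i = 1, g (i.removeNth l) = ∑ m ∈ P k n, g m := by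
  refine sum_nbij' i.removeNth (fun m => i.insertNth 1 m) ?_ ?_ ?_ ?_ fun _ _ => rfl
  · intro l hl
    simp only [mem_filter, mem_P_succ i] at hl
    simpa [hl.2] using hl.1.2.2
  · intro m hm
    simp only [mem_filter, mem_P_succ i, Fin.insertNth_apply_same,
      Fin.removeNth_insertNth]
    simpa using hm
  · exact fun l hl => by simp [← (mem_filter.mp hl).2]
  · intro m _
    exact Fin.removeNth_insertNth (α := fun _ => ℕ) i 1 m

lemma sum_P_succ_filter_ne_one :
    ∑ l ∈ P (k + 1) (n + 1) with l i ≠ 1, g (i.removeNth l) =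
      ∑ l ∈ P (k + 1) n, g (i.removeNth l) := by
  refine sum_nbij' (fun l => Function.update l i (l i - 1))
    (fun l => Function.update l i (l i + 1)) ?_ ?_ ?_ ?_ ?_
  · intro l hl
    simp only [mem_filter, mem_P_succ i, Function.update_self,
      Fin.removeNth_update] at hl ⊢
    obtain ⟨⟨hpos, hle, hP⟩, hne⟩ := hl
    refine ⟨by omega, by omega, ?_⟩
    rwa [show n - (l i - 1) = n + 1 - l i by omega]
  · intro l hl
    simp only [mem_filter, mem_P_succ i, Function.update_self,
      Fin.removeNth_update] at hl ⊢
    obtain ⟨hpos, hle, hP⟩ := hl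
    refine ⟨⟨by omega, by omega, ?_⟩, by omega⟩
    rwa [show n + 1 - (l i + 1) = n - l i by omega]
  · intro l hl
    simp only [mem_filter, mem_P_succ i] at hl
    simp only [Function.update_self, Function.update_idem]
    rw [Nat.sub_add_cancel hl.1.1, Function.update_eq_self]
  · intro l _
    simp
  · intro l _
    simp only [Fin.removeNth_update]

lemma sum_P_succ_removeNth :
    ∑ l ∈ P (k + 1) (n + 1), g (i.removeNth l) =
      ∑ m ∈ P k n, g m + ∑ l ∈ P (k + 1) n, g (i.removeNth l) := by
  rw [← sum_filter_add_sum_filter_not _ (fun l => l i = 1), sum_P_succ_filter_eq_one,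
    sum_P_succ_filter_ne_one]

end

lemma mul_inv_prod_eq_inv_prod_removeNth {K : Type*} [Field K] {k : ℕ} (f : Fin (k + 1) → K)
    (i : Fin (k + 1)) (hi : f i ≠ 0) :
    f i * (∏ j, f j)⁻¹ = (∏ j, i.removeNth f j)⁻¹ := by
  rw [Fin.prod_univ_succAbove f i, mul_inv, ← mul_assoc, mul_inv_cancel₀ hi, one_mul]
  rfl

lemma sum_P_sum_inv_prod_removeNth (k n : ℕ) :
    ∑ l ∈ P (k + 1) n, ∑ i : Fin (k + 1), (∏ j, (i.removeNth l j : ℚ))⁻¹ = n * S (k + 1) n := by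
  rw [S, mul_sum]
  refine sum_congr rfl fun l hl => ?_
  obtain ⟨hsum, hpos⟩ := mem_P.mp hl
  calc ∑ i, (∏ j, (i.removeNth l j : ℚ))⁻¹ = ∑ i, (l i : ℚ) * (∏ j, (l j : ℚ))⁻¹ :=
        sum_congr rfl fun i _ => (mul_inv_prod_eq_inv_prod_removeNth (fun j => (l j : ℚ)) i
          (Nat.cast_ne_zero.mpr (hpos i).ne')).symm
    _ = n * (∏ j, (l j : ℚ))⁻¹ := by rw [← sum_mul, ← hsum, Nat.cast_sum]

lemma S_succ_succ (k n : ℕ) :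
    ((n : ℚ) + 1) * S (k + 1) (n + 1) = (k + 1) * S k n + n * S (k + 1) n := by
  calc ((n : ℚ) + 1) * S (k + 1) (n + 1)
        = ∑ l ∈ P (k + 1) (n + 1), ∑ i : Fin (k + 1), (∏ j, (i.removeNth l j : ℚ))⁻¹ := by
          rw [sum_P_sum_inv_prod_removeNth]; push_cast; ring
    _ = ∑ i : Fin (k + 1), (S k n + ∑ l ∈ P (k + 1) n, (∏ j, (i.removeNth l j : ℚ))⁻¹) := by
          rw [sum_comm]
          exact sum_congr rfl fun i _ =>
            sum_P_succ_removeNth (fun m => (∏ j, (m j : ℚ))⁻¹) i n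
    _ = (k + 1) * S k n + n * S (k + 1) n := by
          rw [sum_add_distrib, sum_comm, sum_P_sum_inv_prod_removeNth]
          simp

theorem factorial_mul_S (k n : ℕ) : (n ! : ℚ) * S k n = k ! * stirlingFirst n k := by
  induction n generalizing k with
  | zero => cases k <;> simp [S, P, Finset.Nat.antidiagonalTuple_zero_right, filter_singleton]
  | succ n ih =>
    cases k with
    | zero => simp [S, P]
    | succ k =>
      have ih' := ih (k + 1)
      rw [factorial_succ] at ih' ⊢
      rw [factorial_succ, stirlingFirst_succ_succ]
      push_cast at ih' ⊢
      linear_combination (n ! : ℚ) * S_succ_succ k n + (k + 1) * ih k + n * ih'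

lemma coeff_prod_range_X_add_succ {R : Type*} [CommSemiring R] (m k : ℕ) :
    (∏ i ∈ range m, (X + C ((i : R) + 1))).coeff k = (stirlingFirst (m + 1) (k + 1) : R) := by
  induction m generalizing k with
  | zero => cases k <;> simp [coeff_one, stirlingFirst_succ_succ]
  | succ m ih =>
    rw [prod_range_succ, mul_add, coeff_add, coeff_mul_C, stirlingFirst_succ_succ (m + 1), ih]
    cases k with
    | zero => simp [mul_comm]
    | succ k => rw [coeff_mul_X, ih]; push_cast; ring

lemma esym_sub_eq_stirlingFirst {m k : ℕ} (hk : k ≤ m) :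
    esym m (m - k) = stirlingFirst (m + 1) (k + 1) := by
  rw [← coeff_prod_range_X_add_succ, prod_eq_multiset_prod,
    Multiset.prod_X_add_C_coeff' _ _ (by simpa using hk)]
  simp [esym]

theorem stmt0 (k n : ℕ) (hk : 0 < k) (hkn : k ≤ n) :
    S k n = (k.factorial : ℚ) / n.factorial * esym (n - 1) (n - k) := by
  obtain ⟨k, rfl⟩ := Nat.exists_eq_add_one.mpr hk
  obtain ⟨m, rfl⟩ := Nat.exists_eq_add_one.mpr (lt_of_lt_of_le hk hkn)
  rw [add_tsub_cancel_right, Nat.add_sub_add_right, esym_sub_eq_stirlingFirst (by omega),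
    div_mul_eq_mul_div, eq_div_iff (by positivity), mul_comm, factorial_mul_S]
end

section
/- For a positive integer n, the sum over m from 0 to n-k of (n-1)!/(m+k-1)! · e_m(1,2,…,m+k-2) equals e_{n-k}(1,2,…,n-1), where e_l denotes elementary symmetric polynomials and 1 ≤ k ≤ n. -/
open Finset Polynomial

lemma esymm_cons (a : ℚ) (s : Multiset ℚ) (l : ℕ) :
    (a ::ₘ s).esymm (l + 1) = s.esymm (l + 1) + a * s.esymm l := by
  simp only [Multiset.esymm, Multiset.powersetCard_cons, Multiset.map_add, Multiset.sum_add,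
    Multiset.map_map, Function.comp_def, Multiset.prod_cons, ← Multiset.sum_map_mul_left]

lemma esym_eq (m l : ℕ) :
    esym m l = (Multiset.map (fun i : ℕ => ((i : ℚ) + 1)) (Finset.range m).val).esymm l := by
  simp [esym, Multiset.map_map, Function.comp_def]

lemma esym_zero (m : ℕ) : esym m 0 = 1 := by
  simp [esym, Multiset.esymm]

lemma esym_succ (t l : ℕ) : esym (t + 1) (l + 1) = esym t (l + 1) + (t + 1) * esym t l := by
  have h : Multiset.map (fun i : ℕ => ((i : ℚ) + 1)) (Finset.range (t + 1)).val
      = ((t : ℚ) + 1) ::ₘ Multiset.map (fun i : ℕ => ((i : ℚ) + 1)) (Finset.range t).val := by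
    rw [Finset.range_add_one, Finset.insert_val_of_notMem (by simp), Multiset.map_cons]
  rw [esym_eq, esym_eq t (l + 1), esym_eq t l, h, esymm_cons]

lemma key (k : ℕ) (hk : 1 ≤ k) : ∀ n, k ≤ n →
    ∑ m ∈ Finset.range (n - k + 1),
      ((n - 1).factorial : ℚ) / (m + k - 1).factorial * esym (m + k - 2) m
      = esym (n - 1) (n - k) := by
  intro n hkn
  induction n, hkn using Nat.le_induction with
  | base =>
    have : k - k = 0 := by omega
    rw [this]
    simp only [Finset.sum_range_one, Nat.zero_add, esym_zero, mul_one]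
    rw [div_self (by exact_mod_cast (Nat.factorial_ne_zero _))]
  | succ n hkn IH =>
    have h1 : n + 1 - 1 = n := by omega
    have h2 : n + 1 - k = n - k + 1 := by omega
    have h3 : (n - k + 1) + k - 1 = n := by omega
    have h4 : (n - k + 1) + k - 2 = n - 1 := by omega
    have h5 : n - 1 + 1 = n := by omega
    rw [h1, h2, Finset.sum_range_succ, h3, h4]
    have hfac : (n.factorial : ℚ) = n * (n - 1).factorial := by
      rw [← h5, Nat.factorial_succ]; push_cast [h5]; ring
    have hsum : ∑ m ∈ Finset.range (n - k + 1),
        (n.factorial : ℚ) / (m + k - 1).factorial * esym (m + k - 2) m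
        = n * esym (n - 1) (n - k) := by
      rw [← IH, Finset.mul_sum]
      refine Finset.sum_congr rfl fun m _ => ?_
      rw [hfac]; ring
    rw [hsum, div_self (by exact_mod_cast (Nat.factorial_ne_zero _)), one_mul]
    have hs := esym_succ (n - 1) (n - k)
    rw [h5, Nat.cast_sub (by omega : 1 ≤ n), Nat.cast_one] at hs
    rw [hs]
    ring

theorem stmt2 (n k : ℕ) (hn : 0 < n) (hk : 1 ≤ k) (hkn : k ≤ n) :
    ∑ m ∈ Finset.range (n - k + 1),
      ((n - 1).factorial : ℚ) / (m + k - 1).factorial * esym (m + k - 2) m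
      = esym (n - 1) (n - k) := key k hk n hkn
end

section
/- Define b(1,j,k) := (−1)^{j+1−k} B_{j+1−k}/(j+1−k)! for 1 ≤ k ≤ 1+j, where B_n are Bernoulli numbers, and recursively b(i,j,k) := ∑_{m=0}^{min(j, i+j−k)} ((−1)^m B_m/m!)·b(i−1, j+1−m, k) for i ≥ 2. Then for every positive integer i and 1 ≤ k ≤ i+1, b(i,1,k) = ∑_{(l₁,…,l_k)∈P(k,i+1)} 1/(l₁⋯l_k). -/
/-!
Write `E = 1 - e^{-X}`, `C = X / E = ∑ B'ₘ Xᵐ / m!` (so `B'ₘ = (-1)ᵐ Bₘ`) and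
`L = -log (1 - X) = ∑ Xⁿ / n`, so that `L^k = ∑ₙ S(k, n) Xⁿ`. Since `L' (1 - X) = 1` and
`E' = 1 - E`, the chain rule gives `L ∘ E = X`, hence `(L / X) ∘ E = X / E = C`.

Let `Tᵢ = ∑ᵣ S(k, i + r) Xʳ` be the tails of `L^k`. For `i ≥ 1`, `j ≥ 1` and `k ≤ i + j`,
`b(i, j, k)` is the coefficient of `Xʲ` in `Tᵢ ∘ E`. For `i = 1` this is because
`T₁ = X^(k-1) (L / X)^k` becomes `X^(k-1) C`; the recursion defining `b` is the coefficient form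
of `C · (Tᵢ ∘ E) = S(k, i) C + X · (Tᵢ₊₁ ∘ E)`, which follows from `Tᵢ = S(k, i) + X Tᵢ₊₁` and
`C E = X`. Finally, the coefficient of `X` in `Tᵢ ∘ E` is `S(k, i + 1)`.
-/

open Finset Polynomial

/-- The coefficients b(i,j,k) defined recursively from Bernoulli numbers. -/
def b : ℕ → ℕ → ℕ → ℚ
  | 0, _, _ => 0
  | 1, j, k => (-1) ^ (j + 1 - k) * _root_.bernoulli (j + 1 - k) / (j + 1 - k).factorial
  | i + 2, j, k =>
      ∑ m ∈ Finset.range (min j (i + 2 + j - k) + 1),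
        (-1) ^ m * _root_.bernoulli m / m.factorial * b (i + 1) (j + 1 - m) k

namespace PowerSeries

section CoeffShift

variable {R : Type*} [CommRing R]

noncomputable def coeffShift (i : ℕ) (f : R⟦X⟧) : R⟦X⟧ := mk fun n => coeff (n + i) f

theorem coeffShift_eq_C_add_X_mul (i : ℕ) (f : R⟦X⟧) :
    coeffShift i f = C (coeff i f) + X * coeffShift (i + 1) f := by
  ext (_ | n)
  · simp [coeffShift]
  · simp [coeffShift, coeff_succ_X_mul, Nat.add_right_comm n 1 i, add_assoc]

theorem coeffShift_X_pow_mul (i : ℕ) (g : R⟦X⟧) : coeffShift i (X ^ i * g) = g := by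
  ext n
  simp [coeffShift, coeff_X_pow_mul']

theorem coeff_eq_sum_of_eq_C_add_mul {c e g h : R⟦X⟧} {a : R} (hce : c * e = X)
    (he : constantCoeff e = 0) (hg : g = C a + e * h) (j : ℕ) :
    coeff j h = ∑ m ∈ Finset.range (j + 1), coeff m c * coeff (j + 1 - m) g := by
  have hcg : c * g = a • c + X * h := by rw [hg, mul_add, ← mul_assoc, hce, smul_eq_C_mul]; ring
  have hg0 : coeff 0 g = a := by simp [hg, he]
  have := congrArg (coeff (j + 1)) hcg
  rw [coeff_mul, Finset.Nat.sum_antidiagonal_eq_sum_range_succ (fun m n => coeff m c * coeff n g),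
    Finset.sum_range_succ, Nat.sub_self, hg0, map_add, coeff_smul, coeff_succ_X_mul,
    smul_eq_mul] at this
  linear_combination -this

end CoeffShift

noncomputable def oneSubExpNeg : ℚ⟦X⟧ := 1 - evalNegHom (exp ℚ)

/-- `-log (1 - X)`, whose constant coefficient is the junk value `0⁻¹ = 0`. -/
noncomputable def negLogOneSub : ℚ⟦X⟧ := mk fun n => (n : ℚ)⁻¹

theorem constantCoeff_oneSubExpNeg : constantCoeff oneSubExpNeg = 0 := by
  rw [oneSubExpNeg, map_sub, evalNegHom, ← coeff_zero_eq_constantCoeff_apply (rescale _ _),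
    coeff_rescale]
  simp

theorem hasSubst_oneSubExpNeg : HasSubst oneSubExpNeg :=
  HasSubst.of_constantCoeff_zero' constantCoeff_oneSubExpNeg

theorem bernoulli'PowerSeries_mul_oneSubExpNeg : bernoulli'PowerSeries ℚ * oneSubExpNeg = X := by
  have h1 := bernoulli'PowerSeries_mul_exp_sub_one ℚ
  have h2 := exp_mul_exp_neg_eq_one (A := ℚ)
  rw [oneSubExpNeg]
  linear_combination evalNegHom (exp ℚ) * h1 + (X - bernoulli'PowerSeries ℚ) * h2

theorem derivative_oneSubExpNeg : d⁄dX ℚ oneSubExpNeg = 1 - oneSubExpNeg := by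
  ext n
  simp only [oneSubExpNeg, evalNegHom, map_sub, Derivation.map_one_eq_zero, zero_sub, map_neg,
    coeff_derivative, coeff_rescale, coeff_exp, Algebra.algebraMap_self, Nat.factorial_succ,
    Nat.cast_mul, Nat.cast_add, Nat.cast_one, one_div, mul_inv_rev, eq_ratCast, Rat.cast_mul,
    Rat.cast_inv, Rat.cast_natCast, Rat.cast_add, Rat.cast_one, sub_sub_cancel, map_inv₀,
    map_natCast]
  field_simp
  ring

theorem derivative_negLogOneSub : d⁄dX ℚ negLogOneSub = mk 1 := by
  ext n
  simp only [negLogOneSub, coeff_derivative, coeff_mk, Nat.cast_add, Nat.cast_one, Pi.one_apply]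
  exact inv_mul_cancel₀ (by positivity)

theorem negLogOneSub_subst_oneSubExpNeg : negLogOneSub.subst oneSubExpNeg = X := by
  refine derivative.ext ?_ ?_
  · rw [derivative_subst hasSubst_oneSubExpNeg, derivative_oneSubExpNeg, derivative_negLogOneSub,
      derivative_X]
    have h := congrArg (subst oneSubExpNeg) (mk_one_mul_one_sub_eq_one (S := ℚ))
    rwa [← coe_substAlgHom hasSubst_oneSubExpNeg, map_mul, map_sub, map_one,
      coe_substAlgHom, subst_X hasSubst_oneSubExpNeg] at h
  · exact (constantCoeff_subst_eq_zero constantCoeff_oneSubExpNeg _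
      (by simp [negLogOneSub])).trans (by simp)

theorem negLogOneSub_eq_X_mul : negLogOneSub = X * coeffShift 1 negLogOneSub := by
  simpa [negLogOneSub, coeffShift] using coeffShift_eq_C_add_X_mul 0 negLogOneSub

theorem coeffShift_one_negLogOneSub_subst :
    (coeffShift 1 negLogOneSub).subst oneSubExpNeg = bernoulli'PowerSeries ℚ := by
  have hE : oneSubExpNeg ≠ 0 := fun h => X_ne_zero (R := ℚ) <| by
    rw [← bernoulli'PowerSeries_mul_oneSubExpNeg, h, mul_zero]
  refine mul_left_cancel₀ hE ?_
  calc oneSubExpNeg * (coeffShift 1 negLogOneSub).subst oneSubExpNeg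
      = (X * coeffShift 1 negLogOneSub).subst oneSubExpNeg := by
        rw [subst_mul hasSubst_oneSubExpNeg, subst_X hasSubst_oneSubExpNeg]
    _ = oneSubExpNeg * bernoulli'PowerSeries ℚ := by
        rw [← negLogOneSub_eq_X_mul, negLogOneSub_subst_oneSubExpNeg, mul_comm,
          bernoulli'PowerSeries_mul_oneSubExpNeg]

theorem coeff_bernoulli'PowerSeries_rat (m : ℕ) :
    coeff m (bernoulli'PowerSeries ℚ) = (-1) ^ m * _root_.bernoulli m / m.factorial := by
  simp [bernoulli'PowerSeries, bernoulli'_eq_bernoulli]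

end PowerSeries

open PowerSeries

theorem S_eq_coeff_negLogOneSub_pow (k n : ℕ) : S k n = coeff n (negLogOneSub ^ k) := by
  rw [← Fin.prod_const, coeff_prod, S, P, Finset.sum_filter]
  refine (Finset.sum_equiv Finsupp.equivFunOnFinite
    (by simp [Finset.Nat.mem_antidiagonalTuple]) fun l _ => ?_).symm
  split_ifs with hl
  · simp [negLogOneSub, Finset.prod_inv_distrib]
  · obtain ⟨i, hi⟩ := not_forall.mp hl
    have hli : (l i : ℚ) = 0 := by simpa using hi
    simp [negLogOneSub, Finset.prod_eq_zero (f := fun j => (l j : ℚ)) (Finset.mem_univ i) hli]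

noncomputable def bSeries (i k : ℕ) : ℚ⟦X⟧ := (coeffShift i (negLogOneSub ^ k)).subst oneSubExpNeg

theorem bSeries_eq_C_add_mul (i k : ℕ) :
    bSeries i k = PowerSeries.C (S k i) + oneSubExpNeg * bSeries (i + 1) k := by
  rw [bSeries, coeffShift_eq_C_add_X_mul, subst_add hasSubst_oneSubExpNeg,
    subst_mul hasSubst_oneSubExpNeg, subst_C, subst_X hasSubst_oneSubExpNeg,
    S_eq_coeff_negLogOneSub_pow, bSeries]
  rfl

theorem bSeries_of_le {i k : ℕ} (h : i ≤ k) :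
    bSeries i k = PowerSeries.X ^ (k - i) * bernoulli'PowerSeries ℚ ^ i := by
  obtain ⟨d, rfl⟩ := Nat.exists_eq_add_of_le h
  have hL : negLogOneSub ^ (i + d) =
      PowerSeries.X ^ i * (PowerSeries.X ^ d * coeffShift 1 negLogOneSub ^ (i + d)) := by
    conv_lhs => rw [negLogOneSub_eq_X_mul]
    ring
  rw [bSeries, hL, coeffShift_X_pow_mul, subst_mul hasSubst_oneSubExpNeg,
    subst_pow hasSubst_oneSubExpNeg, subst_pow hasSubst_oneSubExpNeg,
    subst_X hasSubst_oneSubExpNeg, coeffShift_one_negLogOneSub_subst,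
    ← bernoulli'PowerSeries_mul_oneSubExpNeg, Nat.add_sub_cancel_left]
  ring

theorem coeff_bSeries_of_lt {i j k : ℕ} (h : j + i < k) : coeff j (bSeries i k) = 0 := by
  rw [bSeries_of_le (by omega), PowerSeries.coeff_X_pow_mul', if_neg (by omega)]

theorem coeff_bSeries_succ (i k j : ℕ) :
    coeff j (bSeries (i + 1) k) = ∑ m ∈ Finset.range (j + 1),
      coeff m (bernoulli'PowerSeries ℚ) * coeff (j + 1 - m) (bSeries i k) :=
  coeff_eq_sum_of_eq_C_add_mul bernoulli'PowerSeries_mul_oneSubExpNeg constantCoeff_oneSubExpNeg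
    (bSeries_eq_C_add_mul i k) j

theorem coeff_one_bSeries (i k : ℕ) : coeff 1 (bSeries i k) = S k (i + 1) := by
  have h := coeff_bSeries_succ i k 0
  rw [bSeries_eq_C_add_mul] at h
  simpa [constantCoeff_oneSubExpNeg, bernoulli'PowerSeries] using h.symm

theorem b_one_eq_coeff_bSeries {j k : ℕ} (hk : 1 ≤ k) (hkj : k ≤ j + 1) :
    b 1 j k = coeff j (bSeries 1 k) := by
  rw [bSeries_of_le hk, pow_one, PowerSeries.coeff_X_pow_mul', if_pos (by omega),
    coeff_bernoulli'PowerSeries_rat, show j - (k - 1) = j + 1 - k by omega, b]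

theorem b_succ_eq_coeff_bSeries {i j k : ℕ} (hj : 1 ≤ j) (hk : 1 ≤ k) (hkj : k ≤ i + 1 + j) :
    b (i + 1) j k = coeff j (bSeries (i + 1) k) := by
  induction i generalizing j with
  | zero => exact b_one_eq_coeff_bSeries hk (by omega)
  | succ i ih =>
    calc b (i + 2) j k
        = ∑ m ∈ Finset.range (min j (i + 2 + j - k) + 1),
            coeff m (bernoulli'PowerSeries ℚ) * b (i + 1) (j + 1 - m) k := by
          simp only [b, coeff_bernoulli'PowerSeries_rat]
      _ = ∑ m ∈ Finset.range (min j (i + 2 + j - k) + 1),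
            coeff m (bernoulli'PowerSeries ℚ) * coeff (j + 1 - m) (bSeries (i + 1) k) := by
          refine Finset.sum_congr rfl fun m hm => ?_
          rw [Finset.mem_range] at hm
          rw [ih (by omega) (by omega)]
      _ = ∑ m ∈ Finset.range (j + 1),
            coeff m (bernoulli'PowerSeries ℚ) * coeff (j + 1 - m) (bSeries (i + 1) k) := by
          refine Finset.sum_subset (Finset.range_subset_range.mpr (by omega)) fun m hm hm' => ?_
          rw [Finset.mem_range] at hm hm'
          rw [coeff_bSeries_of_lt (by omega), mul_zero]
      _ = coeff j (bSeries (i + 2) k) := (coeff_bSeries_succ _ _ _).symm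

theorem stmt15 (i k : ℕ) (hi : 0 < i) (hk1 : 1 ≤ k) (hk2 : k ≤ i + 1) :
    b i 1 k = S k (i + 1) := by
  obtain ⟨i, rfl⟩ : ∃ i', i = i' + 1 := ⟨i - 1, by omega⟩
  rw [b_succ_eq_coeff_bSeries le_rfl hk1 hk2, coeff_one_bSeries]
end

section
/- With b(i,j,k) defined recursively from Bernoulli numbers as in the paper, for every positive integer i and 1 ≤ k ≤ i+2, b(i,2,k) = ∑_{(l₁,…,l_k)∈P(k,i+2)} 1/(l₁⋯l_k) − (1/2)·∑_{(l₁,…,l_k)∈P(k,i+1)} 1/(l₁⋯l_k). -/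
open Finset Polynomial

def w (r : ℕ) : ℚ := (-1)^r / (Nat.factorial (r+1))
def v : ℕ → ℕ → ℚ
  | 0, r => if r = 0 then 1 else 0
  | a+1, r => ∑ q ∈ Finset.range (r+1), w q * v a (r - q)
noncomputable def cc (m : ℕ) : ℚ := (-1)^m * _root_.bernoulli m / (Nat.factorial m)

lemma v_zero_right (a : ℕ) : v a 0 = 1 := by
  induction a with
  | zero => simp [v]
  | succ a ih => simp [v, ih, w]

lemma v_one (r : ℕ) : v 1 r = w r := by
  rw [v]
  rw [Finset.sum_eq_single r]
  · simp [v]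
  · intro q hq hne
    have : ¬ (r - q = 0) := by simp at hq; omega
    simp [v, this]
  · intro h; simp at h

lemma tri_comm (F : ℕ → ℕ → ℚ) (N : ℕ) :
    ∑ m ∈ Finset.range (N+1), ∑ q ∈ Finset.range (N+1-m), F m q
      = ∑ q ∈ Finset.range (N+1), ∑ m ∈ Finset.range (N+1-q), F m q := by
  have key : ∀ G : ℕ → ℕ → ℚ, (∑ m ∈ Finset.range (N+1), ∑ q ∈ Finset.range (N+1-m), G m q)
      = ∑ m ∈ Finset.range (N+1), ∑ q ∈ Finset.range (N+1), if m + q ≤ N then G m q else 0 := by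
    intro G
    refine Finset.sum_congr rfl fun m hm => ?_
    have h : Finset.filter (fun q => m + q ≤ N) (Finset.range (N+1)) = Finset.range (N+1-m) := by
      ext q; simp only [Finset.mem_filter, Finset.mem_range]; omega
    rw [← h, Finset.sum_filter]
  rw [key F, key fun q m => F m q, Finset.sum_comm]
  exact Finset.sum_congr rfl fun q _ => Finset.sum_congr rfl fun m _ => by rw [Nat.add_comm]

lemma tri (F : ℕ → ℕ → ℚ) (N : ℕ) :
    ∑ m ∈ Finset.range (N+1), ∑ r ∈ Finset.range (N+1-m), F m r
      = ∑ s ∈ Finset.range (N+1), ∑ m ∈ Finset.range (s+1), F m (s-m) := by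
  have h1 : ∀ s ∈ Finset.range (N+1), (∑ m ∈ Finset.range (s+1), F m (s-m))
      = ∑ m ∈ Finset.range (N+1), if m ≤ s then F m (s-m) else 0 := by
    intro s hs
    have h : Finset.filter (fun m => m ≤ s) (Finset.range (N+1)) = Finset.range (s+1) := by
      ext m; simp only [Finset.mem_filter, Finset.mem_range]
      simp at hs; omega
    rw [← h, Finset.sum_filter]
  rw [Finset.sum_congr rfl h1, Finset.sum_comm]
  refine Finset.sum_congr rfl fun m hm => ?_
  have h : Finset.filter (fun s => m ≤ s) (Finset.range (N+1)) = Finset.Ico m (N+1) := by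
    ext s; simp [Finset.mem_filter, Finset.mem_Ico]; omega
  rw [← Finset.sum_filter, h, Finset.sum_Ico_eq_sum_range]
  refine Finset.sum_congr rfl fun r hr => ?_
  congr 1
  omega
lemma L1 (s : ℕ) : ∑ m ∈ Finset.range (s+1), cc m * w (s-m) = if s = 0 then 1 else 0 := by
  have key : ∀ m ∈ Finset.range (s+1), cc m * w (s-m)
      = ((-1)^s / (Nat.factorial (s+1))) * (((s+1).choose m : ℚ) * _root_.bernoulli m) := by
    intro m hm
    have hms : m ≤ s := by simp at hm; omega
    have hsub : s - m + 1 = s + 1 - m := by omega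
    have hch : ((s+1).choose m : ℚ) * (Nat.factorial m) * (Nat.factorial (s+1-m)) =
        (Nat.factorial (s+1)) := by
      exact_mod_cast congrArg (Nat.cast (R := ℚ))
        (Nat.choose_mul_factorial_mul_factorial (by omega : m ≤ s+1))
    have hsign : ((-1:ℚ))^m * (-1)^(s-m) = (-1)^s := by
      rw [← pow_add]; congr 1; omega
    have h1 : (Nat.factorial m : ℚ) ≠ 0 := by positivity
    have h2 : (Nat.factorial (s-m+1) : ℚ) ≠ 0 := by positivity
    have h3 : (Nat.factorial (s+1) : ℚ) ≠ 0 := by positivity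
    rw [cc, w]
    rw [div_mul_div_comm]
    rw [hsub] at h2 ⊢
    field_simp
    ring_nf
    ring_nf at hch
    linear_combination (_root_.bernoulli m * ((Nat.factorial (1+s) : ℚ))) * hsign
      - (_root_.bernoulli m * (-1:ℚ)^s) * hch
  rw [Finset.sum_congr rfl key, ← Finset.mul_sum, _root_.sum_bernoulli]
  rcases Nat.eq_zero_or_pos s with h | h
  · subst h; norm_num [Nat.factorial]
  · have : ¬ (s + 1 = 1) := by omega
    simp [this, Nat.pos_iff_ne_zero.mp h]

lemma L2 (a s : ℕ) : ∑ m ∈ Finset.range (s+1), cc m * v (a+1) (s-m) = v a s := by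
  have h1 : ∀ m ∈ Finset.range (s+1), cc m * v (a+1) (s-m)
      = ∑ q ∈ Finset.range (s+1-m), cc m * (w q * v a (s-m-q)) := by
    intro m hm
    have hms : m ≤ s := by simp at hm; omega
    have hh : s - m + 1 = s + 1 - m := by omega
    rw [v, hh, Finset.mul_sum]
  rw [Finset.sum_congr rfl h1, tri (fun m q => cc m * (w q * v a (s-m-q))) s]
  have h2 : ∀ t ∈ Finset.range (s+1), (∑ m ∈ Finset.range (t+1), cc m * (w (t-m) * v a (s-m-(t-m))))
      = (∑ m ∈ Finset.range (t+1), cc m * w (t-m)) * v a (s-t) := by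
    intro t ht
    rw [Finset.sum_mul]
    refine Finset.sum_congr rfl fun m hm => ?_
    have h3 : s - m - (t - m) = s - t := by simp at hm; omega
    rw [h3]; ring
  rw [Finset.sum_congr rfl h2]
  rw [Finset.sum_congr rfl (fun t ht => by rw [L1 t])]
  rw [Finset.sum_eq_single 0]
  · simp
  · intro t ht hne; simp [hne]
  · intro h; simp at h

lemma LR (m r : ℕ) : ((r:ℚ) + m + 1) * v (m+1) r
    = (m+1) * v m r - (m+1) * (if r = 0 then 0 else v (m+1) (r-1)) := by
  induction m generalizing r with
  | zero =>
    rw [v_one]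
    rcases Nat.eq_zero_or_pos r with h | h
    · subst h; simp [w, v, Nat.factorial]
    · have hr0 : ¬ (r = 0) := by omega
      have : v 0 r = 0 := by simp [v, hr0]
      rw [this, if_neg hr0, v_one, w, w]
      have h1 : (Nat.factorial (r+1) : ℚ) = (r+1) * Nat.factorial r := by
        rw [Nat.factorial_succ]; push_cast; ring
      have h2 : r - 1 + 1 = r := by omega
      have h3 : (-1:ℚ)^r = (-1:ℚ)^(r-1) * (-1) := by
        have := pow_succ (-1:ℚ) (r-1)
        rw [h2] at this
        exact this
      have h4 : (Nat.factorial r : ℚ) ≠ 0 := by positivity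
      rw [h2, h3]
      field_simp
      rw [h1]
      ring
  | succ m ih =>
    -- v (m+2) r = ∑ q ∈ range (r+1), w q * v (m+1) (r-q)
    have hv : v (m+2) r = ∑ q ∈ Finset.range (r+1), w q * v (m+1) (r-q) := by rw [v]
    push_cast
    show ((r:ℚ) + (m+1) + 1) * v (m+2) r = _
    -- split the multiplier
    have split : ∀ q ∈ Finset.range (r+1),
        ((r:ℚ) + (m+1) + 1) * (w q * v (m+1) (r-q))
        = (((q:ℚ)+1) * w q) * v (m+1) (r-q)
          + w q * ((((r-q:ℕ):ℚ) + m + 1) * v (m+1) (r-q)) := by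
      intro q hq
      have hqr : q ≤ r := by simp at hq; omega
      have : ((r-q:ℕ):ℚ) = (r:ℚ) - q := by
        rw [Nat.cast_sub hqr]
      rw [this]; ring
    rw [hv, Finset.mul_sum, Finset.sum_congr rfl split, Finset.sum_add_distrib]
    -- second sum via ih
    have h2 : ∀ q ∈ Finset.range (r+1),
        w q * ((((r-q:ℕ):ℚ) + m + 1) * v (m+1) (r-q))
        = (m+1) * (w q * v m (r-q)) - (m+1) * (w q * (if r-q = 0 then 0 else v (m+1) (r-q-1))) := by
      intro q hq
      rw [ih (r-q)]; ring
    rw [Finset.sum_congr rfl h2, Finset.sum_sub_distrib, ← Finset.mul_sum, ← Finset.mul_sum]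
    have hvm1 : ∑ q ∈ Finset.range (r+1), w q * v m (r-q) = v (m+1) r := by rw [v]
    -- ∑ q, w q * ite (r-q=0) 0 (v (m+1) (r-q-1)) = ite (r=0) 0 (v (m+2) (r-1))
    have htail : ∀ J : ℕ → ℚ, (∑ q ∈ Finset.range (r+1), w q * (if r-q = 0 then 0 else J (r-q-1)))
        = if r = 0 then 0 else ∑ q ∈ Finset.range r, w q * J (r-1-q) := by
      intro J
      rcases Nat.eq_zero_or_pos r with h | h
      · subst h; simp
      · rw [if_neg (by omega)]
        have hsplit : ∑ q ∈ Finset.range (r+1), w q * (if r-q = 0 then 0 else J (r-q-1))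
            = ∑ q ∈ Finset.range r, w q * (if r-q = 0 then 0 else J (r-q-1)) := by
          rw [Finset.sum_range_succ]
          simp
        rw [hsplit]
        refine Finset.sum_congr rfl fun q hq => ?_
        have hqr : q < r := by simpa using hq
        rw [if_neg (by omega), show r - q - 1 = r - 1 - q by omega]
    have htail1 := htail (fun x => v (m+1) x)
    have hvm2 : (if r = 0 then 0 else ∑ q ∈ Finset.range r, w q * v (m+1) (r-1-q))
        = if r = 0 then 0 else v (m+2) (r-1) := by
      rcases Nat.eq_zero_or_pos r with h | h
      · subst h; simp
      · rw [if_neg (by omega), if_neg (by omega)]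
        rw [v]
        have : r - 1 + 1 = r := by omega
        rw [this]
    -- first sum: (q+1) w q = (-1)^q / q!
    have hfirst : ∀ q ∈ Finset.range (r+1), (((q:ℚ)+1) * w q) * v (m+1) (r-q)
        = ((if q = 0 then (1:ℚ) else 0) - (if q = 0 then 0 else w (q-1))) * v (m+1) (r-q) := by
      intro q hq
      congr 1
      rcases Nat.eq_zero_or_pos q with h | h
      · subst h; simp [w, Nat.factorial]
      · rw [if_neg (by omega), if_neg (by omega), w, w]
        have h2 : q - 1 + 1 = q := by omega
        have h3 : (Nat.factorial (q+1) : ℚ) = (q+1) * Nat.factorial q := by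
          rw [Nat.factorial_succ]; push_cast; ring
        have h4 : (-1:ℚ)^q = (-1:ℚ)^(q-1) * (-1) := by
          have := pow_succ (-1:ℚ) (q-1)
          rw [h2] at this
          exact this
        have h5 : (Nat.factorial q : ℚ) ≠ 0 := by positivity
        rw [h2, h3, h4]
        field_simp
        ring
    have hfirstsum : ∑ q ∈ Finset.range (r+1), (((q:ℚ)+1) * w q) * v (m+1) (r-q)
        = v (m+1) r - (if r = 0 then 0 else v (m+2) (r-1)) := by
      rw [Finset.sum_congr rfl hfirst]
      have expand : ∀ q ∈ Finset.range (r+1),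
          ((if q = 0 then (1:ℚ) else 0) - (if q = 0 then 0 else w (q-1))) * v (m+1) (r-q)
          = (if q = 0 then v (m+1) r else 0)
            - (if q = 0 then 0 else w (q-1) * v (m+1) (r-q)) := by
        intro q hq
        rcases Nat.eq_zero_or_pos q with h | h
        · subst h; simp
        · rw [if_neg (by omega), if_neg (by omega), if_neg (by omega), if_neg (by omega)]
          ring
      rw [Finset.sum_congr rfl expand, Finset.sum_sub_distrib]
      congr 1
      · rw [Finset.sum_eq_single 0]
        · simp
        · intro t ht hne; simp [hne]
        · intro h; simp at h
      · rw [Finset.sum_range_succ', if_pos rfl, add_zero]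
        have hterm : ∀ q ∈ Finset.range r,
            (if q + 1 = 0 then (0:ℚ) else w (q+1-1) * v (m+1) (r-(q+1)))
            = w q * v (m+1) (r-1-q) := by
          intro q hq
          rw [if_neg (Nat.succ_ne_zero q), Nat.add_sub_cancel,
            show r - (q+1) = r - 1 - q by omega]
        rw [Finset.sum_congr rfl hterm]
        rcases Nat.eq_zero_or_pos r with h | h
        · subst h; simp
        · rw [if_neg (by omega), v, show r - 1 + 1 = r by omega]
    rw [hfirstsum, hvm1, htail1, hvm2]
    ring

lemma vcore (d : ℕ) : ∑ m ∈ Finset.range d, (1/((m:ℚ)+1)) * v (m+1) (d-1-m)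
    = if d = 1 then 1 else 0 := by
  rcases Nat.eq_zero_or_pos d with h | hd
  · subst h; simp
  obtain ⟨e, rfl⟩ : ∃ e, d = e + 1 := ⟨d-1, by omega⟩
  simp only [Nat.add_sub_cancel]
  refine mul_left_cancel₀ (show ((e:ℚ)+1) ≠ 0 by positivity) ?_
  have key : ∀ m ∈ Finset.range (e+1), ((e:ℚ)+1) * ((1/((m:ℚ)+1)) * v (m+1) (e-m))
      = v m (e-m) - (if m = e then 0 else v (m+1) (e-(m+1))) := by
    intro m hm
    have hmd : m ≤ e := by simp at hm; omega
    have hcast : ((e:ℚ)+1) = ((e-m : ℕ):ℚ) + m + 1 := by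
      have h9 : e - m + m + 1 = e + 1 := by omega
      have := congrArg (Nat.cast (R := ℚ)) h9
      push_cast at this
      linarith
    have hm1 : ((m:ℚ)+1) ≠ 0 := by positivity
    rw [hcast, one_div, inv_mul_eq_div, mul_div_assoc', div_eq_iff hm1]
    rcases Nat.eq_or_lt_of_le hmd with he | hlt
    · rw [if_pos (by omega)]
      have hL := LR m (e-m)
      rw [if_pos (by omega)] at hL
      linear_combination hL
    · rw [if_neg (by omega)]
      have hL := LR m (e-m)
      rw [if_neg (by omega), show e-m-1 = e-(m+1) by omega] at hL
      linear_combination hL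
  rw [Finset.mul_sum, Finset.sum_congr rfl key, Finset.sum_sub_distrib]
  have h1 : ∑ m ∈ Finset.range (e+1), v m (e-m)
      = (∑ m ∈ Finset.range e, v (m+1) (e-(m+1))) + v 0 (e-0) := Finset.sum_range_succ' _ e
  have h2 : ∑ m ∈ Finset.range (e+1), (if m = e then (0:ℚ) else v (m+1) (e-(m+1)))
      = ∑ m ∈ Finset.range e, v (m+1) (e-(m+1)) := by
    rw [Finset.sum_range_succ, if_pos rfl, add_zero]
    refine Finset.sum_congr rfl fun m hm => ?_
    rw [if_neg (by simp at hm; omega)]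
  rw [h1, h2]
  have h3 : v 0 e = if e = 0 then (1:ℚ) else 0 := by rw [v]
  rcases Nat.eq_zero_or_pos e with he | he
  · subst he
    simp [h3]
  · rw [if_neg (by omega)]
    simp only [Nat.sub_zero, h3, if_neg (by omega : ¬ e = 0)]
    ring

lemma L4 (l : ℕ) : ∀ d : ℕ, ∑ m ∈ Finset.range d, (1/((m:ℚ)+1)) * v (l+m+1) (d-1-m)
    = if d = 0 then 0 else v l (d-1) := by
  induction l with
  | zero =>
    intro d
    rcases Nat.eq_zero_or_pos d with h | hd
    · subst h; simp
    rw [if_neg (by omega)]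
    have := vcore d
    simp only [Nat.zero_add] at *
    rw [this]
    rw [v]
    rcases Nat.eq_or_lt_of_le hd with he | hlt
    · rw [if_pos (by omega), if_pos (by omega)]
    · rw [if_neg (by omega), if_neg (by omega)]
  | succ l ih =>
    intro d
    rcases Nat.eq_zero_or_pos d with h | hd
    · subst h; simp
    rw [if_neg (by omega)]
    have expand : ∀ m ∈ Finset.range d, (1/((m:ℚ)+1)) * v (l+1+m+1) (d-1-m)
        = ∑ q ∈ Finset.range (d-m), (1/((m:ℚ)+1)) * (w q * v (l+m+1) (d-1-m-q)) := by
      intro m hm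
      have hmd : m < d := by simpa using hm
      rw [show l+1+m+1 = (l+m+1)+1 by omega, v, show d-1-m+1 = d-m by omega, Finset.mul_sum]
    rw [Finset.sum_congr rfl expand]
    have swap := tri_comm (fun m q => (1/((m:ℚ)+1)) * (w q * v (l+m+1) (d-1-m-q))) (d-1)
    rw [show (d-1)+1 = d by omega] at swap
    rw [swap]
    have inner : ∀ q ∈ Finset.range d,
        (∑ m ∈ Finset.range (d-q), (1/((m:ℚ)+1)) * (w q * v (l+m+1) (d-1-m-q)))
        = w q * v l (d-1-q) := by
      intro q hq
      have hqd : q < d := by simpa using hq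
      have step1 : ∀ m ∈ Finset.range (d-q), (1/((m:ℚ)+1)) * (w q * v (l+m+1) (d-1-m-q))
          = w q * ((1/((m:ℚ)+1)) * v (l+m+1) ((d-q)-1-m)) := by
        intro m hm
        rw [show d-1-m-q = (d-q)-1-m by omega]
        ring
      rw [Finset.sum_congr rfl step1, ← Finset.mul_sum, ih (d-q)]
      rw [if_neg (by omega), show d-q-1 = d-1-q by omega]
    rw [Finset.sum_congr rfl inner]
    rw [v, show d-1+1 = d by omega]

lemma S_zero (n : ℕ) : S 0 n = if n = 0 then 1 else 0 := by
  rcases n with _ | n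
  · rw [if_pos rfl, S, P]
    rw [Finset.Nat.antidiagonalTuple_zero_zero]
    simp
  · rw [if_neg (Nat.succ_ne_zero n), S, P]
    rw [Finset.Nat.antidiagonalTuple_zero_succ]
    simp

lemma S_lt {k n : ℕ} (h : n < k) : S k n = 0 := by
  rw [S]
  apply Finset.sum_eq_zero
  intro l hl
  exfalso
  rw [P, Finset.mem_filter, Finset.Nat.mem_antidiagonalTuple] at hl
  obtain ⟨hsum, hpos⟩ := hl
  have : (Finset.univ : Finset (Fin k)).card • 1 ≤ ∑ i, l i :=
    Finset.card_nsmul_le_sum _ _ _ (fun i _ => hpos i)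
  simp at this
  omega


lemma S_rec (k n : ℕ) : S (k+1) n = ∑ m ∈ Finset.range n, (1/((m:ℚ)+1)) * S k (n-1-m) := by
  have hrhs : ∀ m ∈ Finset.range n, (1/((m:ℚ)+1)) * S k (n-1-m)
      = ∑ t ∈ P k (n-1-m), (1/((m:ℚ)+1)) * (∏ i, (t i : ℚ))⁻¹ := by
    intro m hm; rw [S, Finset.mul_sum]
  rw [Finset.sum_congr rfl hrhs, Finset.sum_sigma']
  rw [S]
  refine Finset.sum_nbij' (fun l => (⟨l 0 - 1, Fin.tail l⟩ : (_ : ℕ) × (Fin k → ℕ)))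
    (fun p => Fin.cons (p.1 + 1) p.2) ?_ ?_ ?_ ?_ ?_
  · intro l hl
    rw [P, Finset.mem_filter, Finset.Nat.mem_antidiagonalTuple] at hl
    obtain ⟨hsum, hpos⟩ := hl
    rw [Fin.sum_univ_succ] at hsum
    have h0 : 0 < l 0 := hpos 0
    simp only [Finset.mem_sigma, Finset.mem_range, P, Finset.mem_filter,
      Finset.Nat.mem_antidiagonalTuple]
    have htail : ∑ i, Fin.tail l i = ∑ i : Fin k, l i.succ := rfl
    refine ⟨by omega, by rw [htail]; omega, fun i => hpos i.succ⟩
  · intro p hp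
    simp only [Finset.mem_sigma, Finset.mem_range, P, Finset.mem_filter,
      Finset.Nat.mem_antidiagonalTuple] at hp
    obtain ⟨hm, hsum, hpos⟩ := hp
    rw [P, Finset.mem_filter, Finset.Nat.mem_antidiagonalTuple]
    constructor
    · rw [Fin.sum_univ_succ]
      simp only [Fin.cons_zero, Fin.cons_succ]
      omega
    · intro i
      refine Fin.cases ?_ ?_ i
      · simp
      · intro j; simp only [Fin.cons_succ]; exact hpos j
  · intro l hl
    rw [P, Finset.mem_filter] at hl
    have h0 : 0 < l 0 := hl.2 0
    have he : l 0 - 1 + 1 = l 0 := by omega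
    simp only [he]
    exact Fin.cons_self_tail l
  · intro p hp
    simp [Fin.tail_cons]
  · intro l hl
    rw [P, Finset.mem_filter] at hl
    have h0 : 0 < l 0 := hl.2 0
    rw [Fin.prod_univ_succ]
    have hc : ((l 0 - 1 : ℕ):ℚ) + 1 = (l 0 : ℚ) := by
      have he : l 0 - 1 + 1 = l 0 := by omega
      exact_mod_cast congrArg (Nat.cast (R := ℚ)) he
    rw [mul_inv]
    have htail : (∏ i, ((Fin.tail l i : ℕ):ℚ))⁻¹ = (∏ i : Fin k, (l i.succ : ℚ))⁻¹ := rfl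
    rw [one_div, hc]
    exact (congrArg (fun z => ((l 0 : ℚ))⁻¹ * z) htail).symm

lemma tri2 (F : ℕ → ℕ → ℚ) (n : ℕ) :
    ∑ s ∈ Finset.range (n+1), ∑ m ∈ Finset.range s, F s m
      = ∑ t ∈ Finset.range n, ∑ m ∈ Finset.range (n-t), F (t+m+1) m := by
  rcases Nat.eq_zero_or_pos n with rfl | hn
  · simp
  obtain ⟨e, rfl⟩ : ∃ e, n = e + 1 := ⟨n-1, by omega⟩
  rw [Finset.sum_range_succ']
  simp only [Finset.range_zero, Finset.sum_empty, add_zero]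
  have h1 := tri (fun a b => F (a+b+1) a) e
  have h2 : ∀ s ∈ Finset.range (e+1), (∑ m ∈ Finset.range (s+1), F (s+1) m)
      = ∑ m ∈ Finset.range (s+1), F (m+(s-m)+1) m := by
    intro s hs
    refine Finset.sum_congr rfl fun m hm => ?_
    have : m + (s-m) + 1 = s+1 := by simp at hm; omega
    rw [this]
  rw [Finset.sum_congr rfl h2, ← h1]
  rw [tri_comm (fun a b => F (a+b+1) a) e]
  refine Finset.sum_congr rfl fun t ht => Finset.sum_congr rfl fun m hm => ?_
  rw [show m+t+1 = t+m+1 by omega]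

lemma L3 (k : ℕ) : ∀ n : ℕ, ∑ s ∈ Finset.range (n+1), v s (n-s) * S k s
    = if n = k then 1 else 0 := by
  induction k with
  | zero =>
    intro n
    have h : ∀ s ∈ Finset.range (n+1), v s (n-s) * S 0 s
        = if s = 0 then v 0 n else 0 := by
      intro s hs
      rw [S_zero]
      rcases Nat.eq_zero_or_pos s with rfl | hs1
      · simp
      · rw [if_neg (by omega), if_neg (by omega)]; ring
    rw [Finset.sum_congr rfl h, Finset.sum_ite_eq' (Finset.range (n+1)) 0 (fun _ => v 0 n)]
    rw [if_pos (by simp), v]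
  | succ k ih =>
    intro n
    rcases Nat.eq_zero_or_pos n with rfl | hn
    · rw [show (0:ℕ)+1 = 1 from rfl, Finset.range_one, Finset.sum_singleton,
        S_lt (show 0 < k+1 by omega), mul_zero, if_neg (by omega)]
    have h1 : ∀ s ∈ Finset.range (n+1), v s (n-s) * S (k+1) s
        = ∑ m ∈ Finset.range s, v s (n-s) * ((1/((m:ℚ)+1)) * S k (s-1-m)) := by
      intro s hs
      rw [S_rec, Finset.mul_sum]
    rw [Finset.sum_congr rfl h1,
      tri2 (fun s m => v s (n-s) * ((1/((m:ℚ)+1)) * S k (s-1-m))) n]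
    have h2 : ∀ t ∈ Finset.range n,
        (∑ m ∈ Finset.range (n-t), v (t+m+1) (n-(t+m+1)) * ((1/((m:ℚ)+1)) * S k (t+m+1-1-m)))
        = v t (n-1-t) * S k t := by
      intro t ht
      have htn : t < n := by simpa using ht
      have h3 : ∀ m ∈ Finset.range (n-t),
          v (t+m+1) (n-(t+m+1)) * ((1/((m:ℚ)+1)) * S k (t+m+1-1-m))
          = ((1/((m:ℚ)+1)) * v (t+m+1) ((n-t)-1-m)) * S k t := by
        intro m hm
        rw [show t+m+1-1-m = t by omega, show n-(t+m+1) = (n-t)-1-m by omega]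
        ring
      rw [Finset.sum_congr rfl h3, ← Finset.sum_mul, L4 t (n-t), if_neg (by omega),
        show n-t-1 = n-1-t by omega]
    rw [Finset.sum_congr rfl h2]
    have h4 := ih (n-1)
    rw [show n-1+1 = n by omega] at h4
    rw [h4]
    by_cases h : n = k + 1
    · simp only [if_pos (show n - 1 = k by omega), if_pos h]
    · simp only [if_neg (show ¬ (n - 1 = k) by omega), if_neg h]

lemma L5 (n k : ℕ) (hk : 1 ≤ k) (hk2 : k ≤ n+1) :
    ∑ s ∈ Finset.range (n+1), v s (n-s) * S k (s+1) = cc (n+1-k) := by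
  have start : cc (n+1-k) = ∑ p ∈ Finset.range (n+2), cc p * (if n+1-p = k then 1 else 0) := by
    rw [Finset.sum_eq_single (n+1-k)]
    · rw [if_pos (by omega), mul_one]
    · intro p hp hne
      rw [if_neg (by simp at hp; omega), mul_zero]
    · intro h; simp at h; omega
  have l3 : ∀ p ∈ Finset.range (n+2), cc p * (if n+1-p = k then (1:ℚ) else 0)
      = ∑ s ∈ Finset.range ((n+1-p)+1), cc p * (v s ((n+1-p)-s) * S k s) := by
    intro p hp
    rw [← L3 k (n+1-p), Finset.mul_sum]
  rw [start, Finset.sum_congr rfl l3]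
  have swap := tri_comm (fun p s => cc p * (v s ((n+1-p)-s) * S k s)) (n+1)
  have pre : ∀ p ∈ Finset.range (n+2), (∑ s ∈ Finset.range ((n+1-p)+1), cc p * (v s ((n+1-p)-s) * S k s))
      = ∑ s ∈ Finset.range (n+2-p), cc p * (v s ((n+1-p)-s) * S k s) := by
    intro p hp
    rw [show (n+1-p)+1 = n+2-p by simp at hp; omega]
  rw [Finset.sum_congr rfl pre, swap]
  have inner : ∀ s ∈ Finset.range (n+2), (∑ p ∈ Finset.range (n+2-s), cc p * (v s ((n+1-p)-s) * S k s))
      = (if s = 0 then 0 else v (s-1) (n+1-s)) * S k s := by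
    intro s hs
    have hsn : s ≤ n+1 := by simp at hs; omega
    rcases Nat.eq_zero_or_pos s with rfl | hs1
    · rw [if_pos rfl, zero_mul]
      apply Finset.sum_eq_zero
      intro p hp
      rw [S_lt (by omega), mul_zero, mul_zero]
    obtain ⟨s', rfl⟩ : ∃ s', s = s' + 1 := ⟨s-1, by omega⟩
    rw [if_neg (by omega), Nat.add_sub_cancel]
    have reord : ∀ p ∈ Finset.range (n+2-(s'+1)), cc p * (v (s'+1) ((n+1-p)-(s'+1)) * S k (s'+1))
        = (cc p * v (s'+1) ((n+1-(s'+1))-p)) * S k (s'+1) := by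
      intro p hp
      rw [show (n+1-p)-(s'+1) = (n+1-(s'+1))-p by simp at hp; omega]
      ring
    rw [Finset.sum_congr rfl reord, ← Finset.sum_mul,
      show n+2-(s'+1) = (n+1-(s'+1))+1 by omega, L2 s' (n+1-(s'+1)),
      show n+1-(s'+1) = n-s' by omega]
  rw [Finset.sum_congr rfl inner]
  apply Eq.symm
  rw [Finset.sum_range_succ']
  rw [if_pos rfl, zero_mul, add_zero]
  refine Finset.sum_congr rfl fun s hs => ?_
  rw [if_neg (Nat.succ_ne_zero s), Nat.add_sub_cancel, show n+1-(s+1) = n-s by omega]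

lemma MAIN : ∀ i : ℕ, 1 ≤ i → ∀ j k : ℕ, 1 ≤ j → 1 ≤ k → k ≤ i + j →
    b i j k = ∑ m ∈ Finset.range j, v (j-m) m * S k (i+j-m) := by
  intro i
  induction i with
  | zero => omega
  | succ i ih =>
    intro _ j k hj hk hki
    rcases Nat.eq_zero_or_pos i with rfl | hi
    · -- base case i = 1
      have hb : b 1 j k = cc (j+1-k) := rfl
      have h5 := L5 j k hk (by omega)
      rw [hb, ← h5]
      have hrefl := Finset.sum_range_reflect (fun s => v s (j-s) * S k (s+1)) (j+1)
      rw [← hrefl, Finset.sum_range_succ]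
      have hlast : v (j+1-1-j) (j-(j+1-1-j)) * S k ((j+1-1-j)+1) = 0 := by
        rw [show j+1-1-j = 0 by omega, Nat.sub_zero, v, if_neg (by omega), zero_mul]
      rw [hlast, add_zero]
      refine Finset.sum_congr rfl fun m hm => ?_
      have hmj : m < j := by simpa using hm
      rw [show j+1-1-m = j-m by omega, show j-(j-m) = m by omega,
        show (j-m)+1 = 0+1+j-m by omega]
    · -- inductive step: i ≥ 1, prove for i+1
      obtain ⟨i', rfl⟩ : ∃ i', i = i' + 1 := ⟨i-1, by omega⟩
      have hb : b (i'+2) j k = ∑ m ∈ Finset.range (min j (i'+2+j-k) + 1),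
          cc m * b (i'+1) (j+1-m) k := by
        rw [b]
        refine Finset.sum_congr rfl fun m hm => ?_
        rw [cc]
      rw [hb]
      have hIH : ∀ m ∈ Finset.range (min j (i'+2+j-k) + 1),
          cc m * b (i'+1) (j+1-m) k
          = ∑ r ∈ Finset.range (j+1-m), cc m * (v ((j+1-m)-r) r * S k ((i'+1)+(j+1-m)-r)) := by
        intro m hm
        have hmm : m ≤ min j (i'+2+j-k) := by simp at hm; omega
        have h1 : 1 ≤ j+1-m := by omega
        have h2 : k ≤ (i'+1)+(j+1-m) := by omega
        rw [ih hi (j+1-m) k h1 hk h2, Finset.mul_sum]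
      rw [Finset.sum_congr rfl hIH]
      have hext : ∑ m ∈ Finset.range (min j (i'+2+j-k) + 1),
          (∑ r ∈ Finset.range (j+1-m), cc m * (v ((j+1-m)-r) r * S k ((i'+1)+(j+1-m)-r)))
          = ∑ m ∈ Finset.range (j+1),
          (∑ r ∈ Finset.range (j+1-m), cc m * (v ((j+1-m)-r) r * S k ((i'+1)+(j+1-m)-r))) := by
        apply Finset.sum_subset
        · intro x hx
          simp at hx ⊢
          omega
        · intro m hm hnm
          simp only [Finset.mem_range] at hm hnm
          have hmb : i'+2+j-k < m := by omega
          apply Finset.sum_eq_zero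
          intro r hr
          rw [S_lt, mul_zero, mul_zero]
          omega
      rw [hext, tri (fun m r => cc m * (v ((j+1-m)-r) r * S k ((i'+1)+(j+1-m)-r))) j]
      have hgrp : ∀ s ∈ Finset.range (j+1),
          (∑ m ∈ Finset.range (s+1), cc m * (v ((j+1-m)-(s-m)) (s-m) * S k ((i'+1)+(j+1-m)-(s-m))))
          = (v (j-s) s) * S k ((i'+2)+j-s) := by
        intro s hs
        have hsj : s ≤ j := by simp at hs; omega
        have hre : ∀ m ∈ Finset.range (s+1),
            cc m * (v ((j+1-m)-(s-m)) (s-m) * S k ((i'+1)+(j+1-m)-(s-m)))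
            = (cc m * v ((j-s)+1) (s-m)) * S k ((i'+2)+j-s) := by
          intro m hm
          have hms : m ≤ s := by simp at hm; omega
          rw [show (j+1-m)-(s-m) = (j-s)+1 by omega,
            show (i'+1)+(j+1-m)-(s-m) = (i'+2)+j-s by omega]
          ring
        rw [Finset.sum_congr rfl hre, ← Finset.sum_mul, L2 (j-s) s]
      rw [Finset.sum_congr rfl hgrp, Finset.sum_range_succ]
      rw [show j - j = 0 by omega, v, if_neg (by omega), zero_mul, add_zero]

theorem stmt16 (i k : ℕ) (hi : 0 < i) (hk1 : 1 ≤ k) (hk2 : k ≤ i + 2) :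
    b i 2 k = S k (i + 2) - 1 / 2 * S k (i + 1) := by
  rw [MAIN i hi 2 k (by omega) hk1 (by omega)]
  rw [Finset.sum_range_succ, Finset.sum_range_succ, Finset.range_zero, Finset.sum_empty]
  rw [show (2:ℕ) - 0 = 2 from rfl, show (2:ℕ) - 1 = 1 from rfl,
    show i + 2 - 0 = i + 2 from rfl, show i + 2 - 1 = i + 1 by omega]
  have h2 : v 2 0 = 1 := v_zero_right 2
  have h1 : v 1 1 = -(1/2) := by
    rw [v_one, w]
    norm_num [Nat.factorial]
  rw [h1, h2]
  ring
end
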